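/- Staging set rule (SP): Let f be globally Lipschitz, S, P ⊆ ℝⁿ, p polynomial, ε > 0. Assume (i) for each solution φ from the initial state, for all t, if φ(s) ∉ P for all s ∈ [0,t], then φ(t) ∈ S; and (ii) for all y ∈ S, p(y) ≤ 0 and ∇p(y)·f(y) ≥ ε. Then the solution satisfies φ(τ) ∈ P for some τ ≥ 0. -/

import Mathlib

/-!
Along the solution, `t ↦ p (φ t)` has derivative `∇p(φ t) · f(φ t)`. If the solution never
entered `P` it would stay in `S` forever, so this function would be nonpositive while growing
at rate at least `ε`, hence would exceed `0` after time `-p(φ 0)/ε`.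
-/

open MvPolynomial

theorem MvPolynomial.hasDerivAt_eval_comp {n : ℕ} (p : MvPolynomial (Fin n) ℝ)
    {φ : ℝ → (Fin n → ℝ)} {v : Fin n → ℝ} {t : ℝ} (hφ : HasDerivAt φ v t) :
    HasDerivAt (fun s => eval (φ s) p) (∑ i, eval (φ t) (pderiv i p) * v i) t := by
  induction p using MvPolynomial.induction_on with
  | C a => simpa using hasDerivAt_const t a
  | add p q hp hq =>
    simp only [map_add, add_mul, Finset.sum_add_distrib]
    exact hp.add hq
  | mul_X q i hq =>
    have hcoord : HasDerivAt (fun s => φ s i) (v i) t := hasDerivAt_pi.mp hφ i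
    have hterm (j : Fin n) : eval (φ t) (pderiv j (q * X i)) * v j
        = eval (φ t) (pderiv j q) * v j * φ t i + if j = i then eval (φ t) q * v j else 0 := by
      rcases eq_or_ne j i with rfl | hji
      · simp; ring
      · simp [hji]; ring
    simp only [eval_mul, eval_X]
    refine (hq.mul hcoord).congr_deriv ?_
    rw [Finset.sum_congr rfl fun j _ => hterm j, Finset.sum_add_distrib,
      Finset.sum_ite_eq' Finset.univ i, ← Finset.sum_mul]
    simp

theorem exists_pos_of_forall_le_hasDerivAt {g g' : ℝ → ℝ} {ε : ℝ} (hε : 0 < ε)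
    (hg : ∀ t, 0 ≤ t → HasDerivAt g (g' t) t) (hg' : ∀ t, 0 ≤ t → ε ≤ g' t) :
    ∃ t, 0 ≤ t ∧ 0 < g t := by
  have hgrowth : ∀ t, 0 ≤ t → ε * t ≤ g t - g 0 := by
    intro t ht
    simpa using (convex_Ici (0 : ℝ)).mul_sub_le_image_sub_of_le_deriv
      (fun s hs => (hg s hs).continuousAt.continuousWithinAt)
      (fun s hs => (hg s (interior_subset hs)).differentiableAt.differentiableWithinAt)
      (fun s hs => (hg s (interior_subset hs)).deriv ▸ hg' s (interior_subset hs))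
      0 Set.self_mem_Ici t ht ht
  have hT : 0 ≤ (1 + |g 0|) / ε := by positivity
  refine ⟨(1 + |g 0|) / ε, hT, ?_⟩
  have := hgrowth _ hT
  rw [mul_div_cancel₀ _ hε.ne'] at this
  linarith [neg_abs_le (g 0)]

theorem staging_set_SP_general (n : ℕ) (f : (Fin n → ℝ) → (Fin n → ℝ))
    (S P : Set (Fin n → ℝ))
    (p : MvPolynomial (Fin n) ℝ) (ε : ℝ) (hε : 0 < ε)
    (φ : ℝ → (Fin n → ℝ)) (hsol : ∀ t : ℝ, 0 ≤ t → HasDerivAt φ (f (φ t)) t)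
    (hstage : ∀ t : ℝ, 0 ≤ t → (∀ s ∈ Set.Icc (0:ℝ) t, φ s ∉ P) → φ t ∈ S)
    (hS : ∀ y ∈ S, eval y p ≤ 0 ∧ ε ≤ ∑ i : Fin n, eval y (pderiv i p) * f y i) :
    ∃ τ : ℝ, 0 ≤ τ ∧ φ τ ∈ P := by
  by_contra! hP
  have hmemS (t : ℝ) (ht : 0 ≤ t) : φ t ∈ S := hstage t ht fun s hs => hP s hs.1
  obtain ⟨t, ht, hpos⟩ := exists_pos_of_forall_le_hasDerivAt hε
    (fun t ht => p.hasDerivAt_eval_comp (hsol t ht)) fun t ht => (hS _ (hmemS t ht)).2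
  exact hpos.not_ge (hS _ (hmemS t ht)).1

/-- Staging set rule SP: if the solution of the globally Lipschitz ODE stays in
the staging set `S` as long as it has not entered `P`, and on `S` the polynomial
`p` is nonpositive with Lie derivative at least `ε > 0`, then the solution
enters `P` at some finite time. -/
theorem staging_set_SP (n : ℕ) (f : (Fin n → ℝ) → (Fin n → ℝ)) (K : NNReal)
    (hf : LipschitzWith K f) (S P : Set (Fin n → ℝ))
    (p : MvPolynomial (Fin n) ℝ) (ε : ℝ) (hε : 0 < ε)
    (φ : ℝ → (Fin n → ℝ)) (hsol : ∀ t : ℝ, 0 ≤ t → HasDerivAt φ (f (φ t)) t)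
    (hstage : ∀ t : ℝ, 0 ≤ t → (∀ s ∈ Set.Icc (0:ℝ) t, φ s ∉ P) → φ t ∈ S)
    (hS : ∀ y ∈ S, eval y p ≤ 0 ∧ ε ≤ ∑ i : Fin n, eval y (pderiv i p) * f y i) :
    ∃ τ : ℝ, 0 ≤ τ ∧ φ τ ∈ P :=
  staging_set_SP_general n f S P p ε hε φ hsol hstage hS
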